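/- arXiv:1609.09547 — 5 statements merged into one kernel-verified Lean document; each statement's English description precedes it below -/
import Mathlib

section
/- Suppose Ã ∈ ℝ^{n×n} and Δ ∈ ℝ^{R×R} are row-stochastic, Δ has at least one entrywise strictly positive column, wᵀΔ = wᵀ for a probability vector w, and α_i ∈ (0,1) for all i. Let P* ∈ ℝ^{n×R} have every row equal to wᵀ. Then f(X) = diag(α) Ã X + (I - diag(α)) X Δ satisfies ‖f(X) - P*‖_∞ ≤ ε ‖X - P*‖_∞ for all X ∈ S_{nR}(1_n), where ε = max_i (α_i + (1-α_i)ζ(Δ)) < 1 and ζ(Δ) = 1 - Σ_r min_s δ_{sr}. In particular P* is the unique fixed point of f in S_{nR}(1_n). -/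
/-!
Both terms of `f` are averaging operators that fix `P*`, and `f` is linear, so `f X - P* = f (X - P*)`
where every row of `E = X - P*` sums to zero. Averaging the rows of `E` with the stochastic matrix
`Ã` does not increase the row-sum norm, while Doeblin's estimate `‖eᵀΔ‖₁ ≤ ζ(Δ) ‖e‖₁` for zero-sum
rows `e` shrinks the second term. A positive column forces `ζ(Δ) < 1`, and uniqueness follows from
the strict contraction.
-/

/-- The social-self NCPM map `f(X) = diag(α) Ã X + (I - diag(α)) X Δ`. -/
noncomputable def ncpmF {n R : ℕ} (α : Fin n → ℝ) (Atil : Matrix (Fin n) (Fin n) ℝ)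
    (Δ : Matrix (Fin R) (Fin R) ℝ) (X : Matrix (Fin n) (Fin R) ℝ) :
    Matrix (Fin n) (Fin R) ℝ :=
  Matrix.diagonal α * Atil * X + (1 - Matrix.diagonal α) * X * Δ

/-- Max absolute row sum (induced ∞-norm). -/
noncomputable def normInf {n R : ℕ} (M : Matrix (Fin n) (Fin R) ℝ) : ℝ :=
  ⨆ i, ∑ r, |M i r|

open Finset Matrix

lemma Real.iSup_lt_of_finite {ι : Type*} [Finite ι] {f : ι → ℝ} {c : ℝ} (h : ∀ i, f i < c)
    (hc : 0 < c) : ⨆ i, f i < c := by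
  cases isEmpty_or_nonempty ι
  · rwa [Real.iSup_of_isEmpty]
  · obtain ⟨i, hi⟩ := exists_eq_ciSup_of_finite (f := f)
    exact hi ▸ h i

section normInf

variable {n R : ℕ}

lemma normInf_nonneg (M : Matrix (Fin n) (Fin R) ℝ) : 0 ≤ normInf M :=
  Real.iSup_nonneg fun _ => sum_nonneg fun _ _ => abs_nonneg _

lemma sum_abs_le_normInf (M : Matrix (Fin n) (Fin R) ℝ) (i : Fin n) :
    ∑ r, |M i r| ≤ normInf M :=
  le_ciSup (f := fun i => ∑ r, |M i r|) (Finite.bddAbove_range _) i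

lemma normInf_le {M : Matrix (Fin n) (Fin R) ℝ} {c : ℝ} (h : ∀ i, ∑ r, |M i r| ≤ c)
    (hc : 0 ≤ c) : normInf M ≤ c :=
  Real.iSup_le h hc

lemma eq_zero_of_normInf_nonpos {M : Matrix (Fin n) (Fin R) ℝ} (h : normInf M ≤ 0) : M = 0 := by
  ext i r
  have hrow : ∑ r, |M i r| = 0 :=
    le_antisymm ((sum_abs_le_normInf M i).trans h) (sum_nonneg fun _ _ => abs_nonneg _)
  exact abs_eq_zero.1 ((sum_eq_zero_iff_of_nonneg fun _ _ => abs_nonneg _).1 hrow r (mem_univ r))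

lemma sum_abs_mul_apply_le_normInf {ι : Type*} {A : Matrix ι (Fin n) ℝ} (hA0 : ∀ i j, 0 ≤ A i j)
    (hA1 : ∀ i, ∑ j, A i j = 1) (E : Matrix (Fin n) (Fin R) ℝ) (i : ι) :
    ∑ r, |(A * E) i r| ≤ normInf E :=
  calc ∑ r, |(A * E) i r|
      ≤ ∑ r, ∑ j, A i j * |E j r| := by
        gcongr with r
        rw [mul_apply]
        refine (abs_sum_le_sum_abs _ _).trans_eq (sum_congr rfl fun j _ => ?_)
        rw [abs_mul, abs_of_nonneg (hA0 i j)]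
    _ = ∑ j, A i j * ∑ r, |E j r| := by
        rw [sum_comm]
        simp only [mul_sum]
    _ ≤ ∑ j, A i j * normInf E := by
        gcongr with j
        exacts [hA0 i j, sum_abs_le_normInf E j]
    _ = normInf E := by rw [← sum_mul, hA1 i, one_mul]

end normInf

lemma iInf_le_apply {ι κ : Type*} [Finite ι] (Δ : Matrix ι κ ℝ) (s : ι) (r : κ) :
    ⨅ s', Δ s' r ≤ Δ s r :=
  ciInf_le (Finite.bddBelow_range _) s

section doeblin

variable {ι κ : Type*} [Fintype ι] [Fintype κ]

/-- The paper's `ζ(Δ) = 1 - Σ_r min_s δ_{sr}`. -/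
noncomputable def doeblinCoeff (Δ : Matrix ι κ ℝ) : ℝ :=
  1 - ∑ r, ⨅ s, Δ s r

lemma doeblinCoeff_nonneg [Nonempty ι] {Δ : Matrix ι κ ℝ} (hΔ1 : ∀ s, ∑ r, Δ s r = 1) :
    0 ≤ doeblinCoeff Δ := by
  obtain ⟨s⟩ := ‹Nonempty ι›
  have : ∑ r, ⨅ s', Δ s' r ≤ ∑ r, Δ s r := sum_le_sum fun r _ => iInf_le_apply Δ s r
  rw [doeblinCoeff]
  linarith [hΔ1 s]

lemma doeblinCoeff_lt_one [Nonempty ι] {Δ : Matrix ι κ ℝ} (hΔ0 : ∀ s r, 0 ≤ Δ s r)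
    (hpos : ∃ r, ∀ s, 0 < Δ s r) : doeblinCoeff Δ < 1 := by
  obtain ⟨r₀, hr₀⟩ := hpos
  obtain ⟨s₀, hs₀⟩ := exists_eq_ciInf_of_finite (f := fun s => Δ s r₀)
  have hsum : 0 < ∑ r, ⨅ s, Δ s r :=
    sum_pos' (fun r _ => le_ciInf fun s => hΔ0 s r) ⟨r₀, mem_univ _, hs₀ ▸ hr₀ s₀⟩
  rw [doeblinCoeff]
  linarith

/-- Since `Σ_s e_s = 0`, subtracting the column minima from `Δ` does not change `eᵀΔ`, and the
reduced matrix is nonnegative with row sums `ζ(Δ)`. -/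
lemma sum_abs_vecMul_le_doeblinCoeff_mul {Δ : Matrix ι κ ℝ} (hΔ1 : ∀ s, ∑ r, Δ s r = 1)
    {e : ι → ℝ} (he : ∑ s, e s = 0) :
    ∑ r, |(e ᵥ* Δ) r| ≤ doeblinCoeff Δ * ∑ s, |e s| := by
  set m : κ → ℝ := fun r => ⨅ s, Δ s r
  have hshift : ∀ r, (e ᵥ* Δ) r = ∑ s, e s * (Δ s r - m r) := fun r => by
    simp [vecMul, dotProduct, mul_sub, sum_sub_distrib, ← sum_mul, he]
  calc ∑ r, |(e ᵥ* Δ) r|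
      ≤ ∑ r, ∑ s, |e s| * (Δ s r - m r) := by
        gcongr with r
        rw [hshift]
        refine (abs_sum_le_sum_abs _ _).trans_eq (sum_congr rfl fun s _ => ?_)
        rw [abs_mul, abs_of_nonneg (sub_nonneg.2 (iInf_le_apply Δ s r))]
    _ = ∑ s, |e s| * doeblinCoeff Δ := by
        rw [sum_comm]
        refine sum_congr rfl fun s _ => ?_
        rw [← mul_sum, sum_sub_distrib, hΔ1 s, doeblinCoeff]
    _ = doeblinCoeff Δ * ∑ s, |e s| := by rw [← sum_mul, mul_comm]

end doeblin

section ncpmF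

variable {n R : ℕ} {α : Fin n → ℝ} {Atil : Matrix (Fin n) (Fin n) ℝ} {Δ : Matrix (Fin R) (Fin R) ℝ}

lemma ncpmF_apply (X : Matrix (Fin n) (Fin R) ℝ) (i : Fin n) (r : Fin R) :
    ncpmF α Atil Δ X i r = α i * (Atil * X) i r + (1 - α i) * (X * Δ) i r := by
  have hdiag : (1 : Matrix (Fin n) (Fin n) ℝ) - diagonal α = diagonal (1 - α) := by
    rw [← diagonal_one, diagonal_sub]
    rfl
  rw [ncpmF, Matrix.add_apply, Matrix.mul_assoc, Matrix.mul_assoc, hdiag, diagonal_mul,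
    diagonal_mul]
  rfl

lemma ncpmF_sub (X Y : Matrix (Fin n) (Fin R) ℝ) :
    ncpmF α Atil Δ X - ncpmF α Atil Δ Y = ncpmF α Atil Δ (X - Y) := by
  simp only [ncpmF, Matrix.mul_sub, Matrix.sub_mul]
  abel

lemma ncpmF_eq_self {P : Matrix (Fin n) (Fin R) ℝ} (hA : Atil * P = P) (hΔ : P * Δ = P) :
    ncpmF α Atil Δ P = P := by
  rw [ncpmF, Matrix.mul_assoc, hA, Matrix.mul_assoc, hΔ, ← Matrix.add_mul, add_sub_cancel,
    Matrix.one_mul]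

lemma normInf_ncpmF_le [Nonempty (Fin R)] (hα : ∀ i, 0 ≤ α i ∧ α i ≤ 1)
    (hA0 : ∀ i j, 0 ≤ Atil i j) (hA1 : ∀ i, ∑ j, Atil i j = 1) (hΔ1 : ∀ s, ∑ r, Δ s r = 1)
    {E : Matrix (Fin n) (Fin R) ℝ} (hE : ∀ i, ∑ r, E i r = 0) :
    normInf (ncpmF α Atil Δ E) ≤ (⨆ i, α i + (1 - α i) * doeblinCoeff Δ) * normInf E := by
  have hζ := doeblinCoeff_nonneg hΔ1
  refine normInf_le (fun i => ?_) (mul_nonneg ?_ (normInf_nonneg E))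
  · obtain ⟨hα0, hα1⟩ := hα i
    have hself : ∑ r, |(E * Δ) i r| ≤ doeblinCoeff Δ * normInf E := by
      simp only [mul_apply_eq_vecMul]
      exact (sum_abs_vecMul_le_doeblinCoeff_mul hΔ1 (hE i)).trans
        (mul_le_mul_of_nonneg_left (sum_abs_le_normInf E i) hζ)
    calc ∑ r, |ncpmF α Atil Δ E i r|
        ≤ ∑ r, (α i * |(Atil * E) i r| + (1 - α i) * |(E * Δ) i r|) := by
          gcongr with r
          rw [ncpmF_apply]
          refine (abs_add_le _ _).trans_eq ?_
          rw [abs_mul, abs_mul, abs_of_nonneg hα0, abs_of_nonneg (sub_nonneg.2 hα1)]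
      _ = α i * ∑ r, |(Atil * E) i r| + (1 - α i) * ∑ r, |(E * Δ) i r| := by
          rw [sum_add_distrib, mul_sum, mul_sum]
      _ ≤ α i * normInf E + (1 - α i) * (doeblinCoeff Δ * normInf E) := by
          gcongr
          exact sum_abs_mul_apply_le_normInf hA0 hA1 E i
      _ = (α i + (1 - α i) * doeblinCoeff Δ) * normInf E := by ring
      _ ≤ (⨆ i, α i + (1 - α i) * doeblinCoeff Δ) * normInf E := by
          gcongr
          · exact normInf_nonneg E
          · exact le_ciSup (f := fun i => α i + (1 - α i) * doeblinCoeff Δ)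
              (Finite.bddAbove_range _) i
  · exact Real.iSup_nonneg fun i => add_nonneg (hα i).1 (mul_nonneg (sub_nonneg.2 (hα i).2) hζ)

end ncpmF

theorem stmt_3_general (n R : ℕ) (α : Fin n → ℝ) (hα : ∀ i, 0 < α i ∧ α i < 1)
    (Atil : Matrix (Fin n) (Fin n) ℝ) (Δ : Matrix (Fin R) (Fin R) ℝ)
    (hA0 : ∀ i j, 0 ≤ Atil i j) (hA1 : ∀ i, ∑ j, Atil i j = 1)
    (hΔ0 : ∀ r s, 0 ≤ Δ r s) (hΔ1 : ∀ r, ∑ s, Δ r s = 1)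
    (hpos : ∃ r, ∀ s, 0 < Δ s r)
    (w : Fin R → ℝ) (hw1 : ∑ r, w r = 1)
    (hwΔ : ∀ r, ∑ s, w s * Δ s r = w r)
    (Pstar : Matrix (Fin n) (Fin R) ℝ) (hPstar : ∀ i r, Pstar i r = w r) :
    (∀ X : Matrix (Fin n) (Fin R) ℝ, (∀ i r, 0 ≤ X i r) → (∀ i, ∑ r, X i r = 1) →
      normInf (ncpmF α Atil Δ X - Pstar) ≤
        (⨆ i, α i + (1 - α i) * (1 - ∑ r, ⨅ s, Δ s r)) * normInf (X - Pstar)) ∧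
    (⨆ i, α i + (1 - α i) * (1 - ∑ r, ⨅ s, Δ s r)) < 1 ∧
    (∀ X : Matrix (Fin n) (Fin R) ℝ, (∀ i r, 0 ≤ X i r) → (∀ i, ∑ r, X i r = 1) →
      ncpmF α Atil Δ X = X → X = Pstar) := by
  obtain ⟨r₀, -⟩ := exists_ne_zero_of_sum_ne_zero (hw1.trans_ne one_ne_zero)
  have : Nonempty (Fin R) := ⟨r₀⟩
  have hfix : ncpmF α Atil Δ Pstar = Pstar := by
    refine ncpmF_eq_self ?_ ?_ <;> ext i r
    · simp [mul_apply, hPstar, ← sum_mul, hA1]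
    · simp [mul_apply, hPstar, hwΔ]
  have hcontr : ∀ X : Matrix (Fin n) (Fin R) ℝ, (∀ i, ∑ r, X i r = 1) →
      normInf (ncpmF α Atil Δ X - Pstar) ≤
        (⨆ i, α i + (1 - α i) * doeblinCoeff Δ) * normInf (X - Pstar) := fun X hX1 => by
    rw [← hfix, ncpmF_sub, hfix]
    refine normInf_ncpmF_le (fun i => ⟨(hα i).1.le, (hα i).2.le⟩) hA0 hA1 hΔ1 fun i => ?_
    simp [hPstar, sum_sub_distrib, hX1, hw1]
  have hε : (⨆ i, α i + (1 - α i) * doeblinCoeff Δ) < 1 := by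
    refine Real.iSup_lt_of_finite (fun i => ?_) one_pos
    nlinarith [(hα i).2, doeblinCoeff_lt_one hΔ0 hpos]
  refine ⟨fun X _ hX1 => hcontr X hX1, hε, fun X _ hX1 hX => ?_⟩
  have hle := hcontr X hX1
  rw [hX] at hle
  refine sub_eq_zero.1 (eq_zero_of_normInf_nonpos ?_)
  nlinarith [normInf_nonneg (X - Pstar)]

theorem stmt_3 (n R : ℕ) (α : Fin n → ℝ) (hα : ∀ i, 0 < α i ∧ α i < 1)
    (Atil : Matrix (Fin n) (Fin n) ℝ) (Δ : Matrix (Fin R) (Fin R) ℝ)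
    (hA0 : ∀ i j, 0 ≤ Atil i j) (hA1 : ∀ i, ∑ j, Atil i j = 1)
    (hAdiag : ∀ i, Atil i i = 0)
    (hΔ0 : ∀ r s, 0 ≤ Δ r s) (hΔ1 : ∀ r, ∑ s, Δ r s = 1)
    (hpos : ∃ r, ∀ s, 0 < Δ s r)
    (w : Fin R → ℝ) (hw0 : ∀ r, 0 ≤ w r) (hw1 : ∑ r, w r = 1)
    (hwΔ : ∀ r, ∑ s, w s * Δ s r = w r)
    (Pstar : Matrix (Fin n) (Fin R) ℝ) (hPstar : ∀ i r, Pstar i r = w r) :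
    (∀ X : Matrix (Fin n) (Fin R) ℝ, (∀ i r, 0 ≤ X i r) → (∀ i, ∑ r, X i r = 1) →
      normInf (ncpmF α Atil Δ X - Pstar) ≤
        (⨆ i, α i + (1 - α i) * (1 - ∑ r, ⨅ s, Δ s r)) * normInf (X - Pstar)) ∧
    (⨆ i, α i + (1 - α i) * (1 - ∑ r, ⨅ s, Δ s r)) < 1 ∧
    (∀ X : Matrix (Fin n) (Fin R) ℝ, (∀ i r, 0 ≤ X i r) → (∀ i, ∑ r, X i r = 1) →
      ncpmF α Atil Δ X = X → X = Pstar) :=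
  stmt_3_general n R α hα Atil Δ hA0 hA1 hΔ0 hΔ1 hpos w hw1 hwΔ Pstar hPstar
end

section
/- Consider P^Λ(t+1) = diag(α) Ã P^Λ(t) + (I - diag(α)) P^Λ(t) Δ₀, where Ã is row-stochastic, α ∈ (0,1)^n, and Δ₀ 1_{k₀} ⪯ c 1_{k₀} with c < 1. Then for any initial P^Λ(0) with nonnegative entries and row sums at most 1, P^Λ(t) → 0 exponentially fast as t → ∞. -/
/-! The update preserves nonnegative entries, and on nonnegative matrices it contracts row sums:
row `i` of `P(t+1)` sums to `αᵢ` times an `Ã`-weighted average of row sums of `P(t)` plus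
`1 - αᵢ` times the row sums of `P(t) Δ₀`, which are at most `c` times those of `P(t)`. Hence the
largest row sum of `P(t)` is at most `ξ ^ t` with `ξ = maxᵢ (αᵢ + (1 - αᵢ) c) < 1`, and for
nonnegative entries the largest row sum is the `∞`-norm. -/

open Matrix Finset

lemma Finite.exists_pos_lt_one_forall_le {ι : Type*} [Finite ι] {f : ι → ℝ}
    (hf : ∀ i, f i < 1) : ∃ ξ, 0 < ξ ∧ ξ < 1 ∧ ∀ i, f i ≤ ξ := by
  rcases isEmpty_or_nonempty ι with _ | _
  · exact ⟨1 / 2, by norm_num, by norm_num, isEmptyElim⟩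
  · obtain ⟨i₀, hi₀⟩ := Finite.exists_max f
    exact ⟨max (f i₀) (1 / 2), by positivity, max_lt (hf i₀) (by norm_num),
      fun i => (hi₀ i).trans (le_max_left _ _)⟩

namespace Matrix

variable {m l k : Type*}

lemma mul_apply_nonneg [Fintype l] {A : Matrix m l ℝ} {B : Matrix l k ℝ}
    (hA : ∀ i j, 0 ≤ A i j) (hB : ∀ i j, 0 ≤ B i j) (i : m) (r : k) : 0 ≤ (A * B) i r :=
  sum_nonneg fun j _ => mul_nonneg (hA i j) (hB j r)

lemma sum_mul_apply_le [Fintype l] [Fintype k] {A : Matrix m l ℝ} {B : Matrix l k ℝ} {M : ℝ}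
    (hA : ∀ i j, 0 ≤ A i j) (hB : ∀ j, ∑ r, B j r ≤ M) (i : m) :
    ∑ r, (A * B) i r ≤ (∑ j, A i j) * M :=
  calc ∑ r, (A * B) i r = ∑ j, A i j * ∑ r, B j r := by
        simp only [mul_apply, mul_sum]
        exact sum_comm
    _ ≤ ∑ j, A i j * M := sum_le_sum fun j _ => mul_le_mul_of_nonneg_left (hB j) (hA i j)
    _ = (∑ j, A i j) * M := (sum_mul ..).symm

section MixingStep

variable [Fintype m] [DecidableEq m] [Fintype k]

def mixingStep (α : m → ℝ) (A : Matrix m m ℝ) (Δ : Matrix k k ℝ) (P : Matrix m k ℝ) :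
    Matrix m k ℝ :=
  diagonal α * A * P + (1 - diagonal α) * P * Δ

variable {α : m → ℝ} {A : Matrix m m ℝ} {Δ : Matrix k k ℝ} {P : Matrix m k ℝ}

lemma mixingStep_apply (i : m) (r : k) :
    mixingStep α A Δ P i r = α i * (A * P) i r + (1 - α i) * (P * Δ) i r := by
  rw [mixingStep, Matrix.mul_assoc, Matrix.mul_assoc, ← diagonal_one, diagonal_sub, add_apply,
    diagonal_mul, diagonal_mul]

lemma mixingStep_nonneg (hα0 : ∀ i, 0 ≤ α i) (hα1 : ∀ i, α i ≤ 1) (hA : ∀ i j, 0 ≤ A i j)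
    (hΔ : ∀ i j, 0 ≤ Δ i j) (hP : ∀ i r, 0 ≤ P i r) (i : m) (r : k) :
    0 ≤ mixingStep α A Δ P i r := by
  rw [mixingStep_apply]
  exact add_nonneg (mul_nonneg (hα0 i) (mul_apply_nonneg hA hP i r))
    (mul_nonneg (sub_nonneg.mpr (hα1 i)) (mul_apply_nonneg hP hΔ i r))

lemma sum_mixingStep_apply_le {c M : ℝ} (hα0 : ∀ i, 0 ≤ α i) (hα1 : ∀ i, α i ≤ 1)
    (hA0 : ∀ i j, 0 ≤ A i j) (hA1 : ∀ i, ∑ j, A i j = 1) (hc : 0 ≤ c)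
    (hΔ : ∀ i, ∑ j, Δ i j ≤ c) (hP0 : ∀ i r, 0 ≤ P i r) (hP : ∀ i, ∑ r, P i r ≤ M) (i : m) :
    ∑ r, mixingStep α A Δ P i r ≤ (α i + (1 - α i) * c) * M := by
  have hAP : ∑ r, (A * P) i r ≤ M := by simpa [hA1 i] using sum_mul_apply_le hA0 hP i
  have hPΔ : ∑ r, (P * Δ) i r ≤ M * c :=
    (sum_mul_apply_le hP0 hΔ i).trans (mul_le_mul_of_nonneg_right (hP i) hc)
  simp only [mixingStep_apply, sum_add_distrib, ← mul_sum]
  calc α i * ∑ r, (A * P) i r + (1 - α i) * ∑ r, (P * Δ) i r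
      ≤ α i * M + (1 - α i) * (M * c) :=
        add_le_add (mul_le_mul_of_nonneg_left hAP (hα0 i))
          (mul_le_mul_of_nonneg_left hPΔ (sub_nonneg.mpr (hα1 i)))
    _ = (α i + (1 - α i) * c) * M := by ring

lemma mixingStep_iterate_nonneg_and_sum_le_pow {c ξ : ℝ} {P : ℕ → Matrix m k ℝ}
    (hα0 : ∀ i, 0 ≤ α i) (hα1 : ∀ i, α i ≤ 1) (hA0 : ∀ i j, 0 ≤ A i j)
    (hA1 : ∀ i, ∑ j, A i j = 1) (hc : 0 ≤ c) (hΔ0 : ∀ i j, 0 ≤ Δ i j)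
    (hΔ : ∀ i, ∑ j, Δ i j ≤ c) (hξ0 : 0 ≤ ξ) (hξ : ∀ i, α i + (1 - α i) * c ≤ ξ)
    (hrec : ∀ t, P (t + 1) = mixingStep α A Δ (P t))
    (hP0 : ∀ i r, 0 ≤ P 0 i r) (hP1 : ∀ i, ∑ r, P 0 i r ≤ 1) (t : ℕ) :
    (∀ i r, 0 ≤ P t i r) ∧ ∀ i, ∑ r, P t i r ≤ ξ ^ t := by
  induction t with
  | zero => exact ⟨hP0, by simpa using hP1⟩
  | succ t ih =>
    obtain ⟨hpos, hsum⟩ := ih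
    rw [hrec]
    refine ⟨mixingStep_nonneg hα0 hα1 hA0 hΔ0 hpos, fun i => ?_⟩
    calc _ ≤ (α i + (1 - α i) * c) * ξ ^ t :=
          sum_mixingStep_apply_le hα0 hα1 hA0 hA1 hc hΔ hpos hsum i
      _ ≤ ξ * ξ ^ t := by gcongr; exact hξ i
      _ = ξ ^ (t + 1) := (pow_succ' ξ t).symm

end MixingStep

end Matrix

theorem stmt_6 (n k₀ : ℕ) (α : Fin n → ℝ) (hα : ∀ i, 0 < α i ∧ α i < 1)
    (Atil : Matrix (Fin n) (Fin n) ℝ)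
    (hA0 : ∀ i j, 0 ≤ Atil i j) (hA1 : ∀ i, ∑ j, Atil i j = 1)
    (c : ℝ) (hc0 : 0 ≤ c) (hc1 : c < 1)
    (Δ₀ : Matrix (Fin k₀) (Fin k₀) ℝ) (hΔ0 : ∀ i j, 0 ≤ Δ₀ i j)
    (hΔrow : ∀ i, ∑ j, Δ₀ i j ≤ c)
    (P : ℕ → Matrix (Fin n) (Fin k₀) ℝ)
    (hrec : ∀ t, P (t + 1) =
      Matrix.diagonal α * Atil * P t + (1 - Matrix.diagonal α) * P t * Δ₀)
    (hP0 : ∀ i r, 0 ≤ P 0 i r) (hP1 : ∀ i, ∑ r, P 0 i r ≤ 1) :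
    ∃ C > (0 : ℝ), ∃ ξ : ℝ, 0 < ξ ∧ ξ < 1 ∧
      ∀ t, (⨆ i, ∑ r, |P t i r|) ≤ C * ξ ^ t := by
  have hα0 i : 0 ≤ α i := (hα i).1.le
  have hα1 i : α i ≤ 1 := (hα i).2.le
  have hcontr i : α i + (1 - α i) * c < 1 := by nlinarith [hα i]
  obtain ⟨ξ, hξ0, hξ1, hξ⟩ := Finite.exists_pos_lt_one_forall_le hcontr
  refine ⟨1, one_pos, ξ, hξ0, hξ1, fun t => ?_⟩
  obtain ⟨hpos, hsum⟩ := Matrix.mixingStep_iterate_nonneg_and_sum_le_pow hα0 hα1 hA0 hA1 hc0 hΔ0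
    hΔrow hξ0.le hξ hrec hP0 hP1 t
  rw [one_mul]
  refine Real.iSup_le (fun i => ?_) (pow_nonneg hξ0.le t)
  simpa only [abs_of_nonneg (hpos i _)] using hsum i
end

section
/- Define T(x) = δ₁₂ K^{-1} 1_n + δ₁₁ K^{-1} diag(α) Ã x + (δ₂₂-δ₁₁) K^{-1} diag(α) diag(x) Ã x, where K = (δ₁₂+δ₂₁) I + δ₂₂ diag(α). Under the assumptions δ_{rs}, α_i ∈ (0,1), δ₁₁+δ₁₂ = δ₂₁+δ₂₂ = 1, δ₂₂ ≥ δ₁₁, and Ã row-stochastic with zero diagonal, T maps [0,1]^n into [0,1]^n and is a contraction with respect to the ∞-norm with Lipschitz constant max_i (2δ₂₂-δ₁₁)α_i / (δ₁₂+δ₂₁+δ₂₂ α_i) < 1. Hence T has a unique fixed point p* in [0,1]^n. -/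
/-!
Each coordinate of `T x` is `(δ12 + δ11 αᵢ sᵢ + (δ22 - δ11) αᵢ xᵢ sᵢ) / Kᵢ` with `sᵢ = (Ã x)ᵢ` a
convex combination of the `xⱼ`. On the cube both `sᵢ` and `xᵢ sᵢ` lie in `[0, 1]`, so the numerator
is at most `δ12 + δ22 αᵢ ≤ Kᵢ`. Moving `x` by `ε` in the sup norm moves `sᵢ` by at most `ε` and
`xᵢ sᵢ` by at most `2ε`, so coordinate `i` moves by at most `(2δ22 - δ11) αᵢ ε / Kᵢ`. This
coefficient is `< 1` because `(δ22 - δ11) αᵢ < δ12 + δ21 = 2 - δ11 - δ22` as soon as `δ22 < 1`.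
Banach's fixed point theorem on the closed cube then gives the unique fixed point.
-/

open Set

/-- The auxiliary map `T` for the two-product self-social NCPM. -/
noncomputable def mapT {n : ℕ} (δ11 δ12 δ21 δ22 : ℝ) (α : Fin n → ℝ)
    (Atil : Matrix (Fin n) (Fin n) ℝ) (x : Fin n → ℝ) : Fin n → ℝ :=
  fun i => (δ12 + δ11 * α i * (∑ j, Atil i j * x j)
    + (δ22 - δ11) * α i * x i * (∑ j, Atil i j * x j)) / (δ12 + δ21 + δ22 * α i)

theorem iSup_abs_sub_eq_dist {ι : Type*} [Fintype ι] (x y : ι → ℝ) :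
    ⨆ i, |x i - y i| = dist x y := by
  have hsup_nonneg : 0 ≤ ⨆ i, |x i - y i| := Real.iSup_nonneg fun i => abs_nonneg _
  refine le_antisymm (Real.iSup_le (fun i => ?_) dist_nonneg)
    ((dist_pi_le_iff hsup_nonneg).2 fun i => ?_)
  · rw [← Real.dist_eq]
    exact dist_le_pi_dist x y i
  · rw [Real.dist_eq]
    exact le_ciSup (Finite.bddAbove_range fun i => |x i - y i|) i

theorem Real.iSup_lt_of_forall_lt {ι : Type*} [Finite ι] {f : ι → ℝ} {a : ℝ} (ha : 0 < a)
    (hf : ∀ i, f i < a) : ⨆ i, f i < a := by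
  rcases isEmpty_or_nonempty ι with _ | _
  · simpa using ha
  · obtain ⟨i, hi⟩ := Finite.exists_max f
    exact (ciSup_le hi).trans_lt (hf i)

theorem existsUnique_fixedPt_of_dist_le {X : Type*} [MetricSpace X] {s : Set X} {f : X → X}
    {q : ℝ} (hsc : IsComplete s) (hne : s.Nonempty) (hsf : MapsTo f s s) (hq : q < 1)
    (hf : ∀ x ∈ s, ∀ y ∈ s, dist (f x) (f y) ≤ q * dist x y) :
    ∃! p, p ∈ s ∧ f p = p := by
  obtain ⟨x, hx⟩ := hne
  have hlip : LipschitzOnWith q.toNNReal f s := LipschitzOnWith.of_dist_le_mul fun x hx y hy =>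
    (hf x hx y hy).trans (mul_le_mul_of_nonneg_right (Real.le_coe_toNNReal q) dist_nonneg)
  have hcontr : ContractingWith q.toNNReal (hsf.restrict f s s) :=
    ⟨Real.toNNReal_lt_one.2 hq, hlip.mapsToRestrict hsf⟩
  obtain ⟨p, hps, hfp, -⟩ := hcontr.exists_fixedPoint' hsc hsf hx (edist_ne_top _ _)
  refine ⟨p, ⟨hps, hfp⟩, fun p' ⟨hp's, hfp'⟩ => ?_⟩
  exact congrArg Subtype.val <| hcontr.fixedPoint_unique' (x := ⟨p', hp's⟩) (y := ⟨p, hps⟩)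
    (Subtype.ext hfp') (Subtype.ext hfp)

section StochasticWeights

variable {ι : Type*} [Fintype ι] {w x y : ι → ℝ}

theorem sum_mul_mem_Icc_of_stochastic (hw0 : ∀ j, 0 ≤ w j) (hw1 : ∑ j, w j = 1)
    (hx : ∀ j, x j ∈ Icc (0 : ℝ) 1) : ∑ j, w j * x j ∈ Icc (0 : ℝ) 1 := by
  refine ⟨Finset.sum_nonneg fun j _ => mul_nonneg (hw0 j) (hx j).1, ?_⟩
  calc ∑ j, w j * x j ≤ ∑ j, w j :=
        Finset.sum_le_sum fun j _ => mul_le_of_le_one_right (hw0 j) (hx j).2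
    _ = 1 := hw1

theorem abs_sum_mul_sub_sum_mul_le_of_stochastic (hw0 : ∀ j, 0 ≤ w j) (hw1 : ∑ j, w j = 1)
    {M : ℝ} (hM : ∀ j, |x j - y j| ≤ M) : |∑ j, w j * x j - ∑ j, w j * y j| ≤ M := by
  calc |∑ j, w j * x j - ∑ j, w j * y j| = |∑ j, w j * (x j - y j)| := by
        simp only [mul_sub, Finset.sum_sub_distrib]
    _ ≤ ∑ j, |w j * (x j - y j)| := Finset.abs_sum_le_sum_abs _ _
    _ = ∑ j, w j * |x j - y j| := by simp only [abs_mul, abs_of_nonneg (hw0 _)]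
    _ ≤ ∑ j, w j * M := Finset.sum_le_sum fun j _ => mul_le_mul_of_nonneg_left (hM j) (hw0 j)
    _ = M := by rw [← Finset.sum_mul, hw1, one_mul]

end StochasticWeights

theorem abs_mul_sub_mul_le {a b c d : ℝ} (ha : |a| ≤ 1) (hd : |d| ≤ 1) :
    |a * b - c * d| ≤ |b - d| + |a - c| :=
  calc |a * b - c * d| = |a * (b - d) + (a - c) * d| := by ring_nf
    _ ≤ |a| * |b - d| + |a - c| * |d| := (abs_add_le _ _).trans_eq (by rw [abs_mul, abs_mul])
    _ ≤ |b - d| + |a - c| :=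
        add_le_add (mul_le_of_le_one_left (abs_nonneg _) ha)
          (mul_le_of_le_one_right (abs_nonneg _) hd)

theorem contraction_coeff_lt_one {δ11 δ12 δ21 δ22 a : ℝ} (hrow1 : δ11 + δ12 = 1)
    (hrow2 : δ21 + δ22 = 1) (h22 : δ22 < 1) (hord : δ11 ≤ δ22) (ha1 : a ≤ 1)
    (hK : 0 < δ12 + δ21 + δ22 * a) : (2 * δ22 - δ11) * a / (δ12 + δ21 + δ22 * a) < 1 := by
  rw [div_lt_one hK]
  nlinarith [mul_le_mul_of_nonneg_left ha1 (sub_nonneg.2 hord)]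

namespace mapT

variable {n : ℕ} {δ11 δ12 δ21 δ22 : ℝ} {α : Fin n → ℝ} {Atil : Matrix (Fin n) (Fin n) ℝ}
  {x y : Fin n → ℝ}

theorem sub_apply (i : Fin n) :
    mapT δ11 δ12 δ21 δ22 α Atil x i - mapT δ11 δ12 δ21 δ22 α Atil y i =
      (δ11 * α i * (∑ j, Atil i j * x j - ∑ j, Atil i j * y j)
        + (δ22 - δ11) * α i * (x i * ∑ j, Atil i j * x j - y i * ∑ j, Atil i j * y j))
        / (δ12 + δ21 + δ22 * α i) := by
  rw [mapT, mapT, div_sub_div_same]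
  ring_nf

theorem mem_Icc (hA0 : ∀ i j, 0 ≤ Atil i j) (hA1 : ∀ i, ∑ j, Atil i j = 1)
    (h11 : 0 ≤ δ11) (h12 : 0 ≤ δ12) (h21 : 0 ≤ δ21) (hord : δ11 ≤ δ22)
    (hα : ∀ i, 0 ≤ α i) (hK : ∀ i, 0 < δ12 + δ21 + δ22 * α i) (hx : ∀ i, x i ∈ Icc (0 : ℝ) 1)
    (i : Fin n) : mapT δ11 δ12 δ21 δ22 α Atil x i ∈ Icc (0 : ℝ) 1 := by
  obtain ⟨hs0, hs1⟩ := sum_mul_mem_Icc_of_stochastic (hA0 i) (hA1 i) hx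
  have hxs0 : 0 ≤ x i * ∑ j, Atil i j * x j := mul_nonneg (hx i).1 hs0
  have hxs1 : x i * ∑ j, Atil i j * x j ≤ 1 := mul_le_one₀ (hx i).2 hs0 hs1
  have hc11 : 0 ≤ δ11 * α i := mul_nonneg h11 (hα i)
  have hc22 : 0 ≤ (δ22 - δ11) * α i := mul_nonneg (sub_nonneg.2 hord) (hα i)
  have hnum : δ12 + δ11 * α i * (∑ j, Atil i j * x j)
      + (δ22 - δ11) * α i * x i * (∑ j, Atil i j * x j)
      = δ12 + δ11 * α i * (∑ j, Atil i j * x j)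
      + (δ22 - δ11) * α i * (x i * ∑ j, Atil i j * x j) := by ring
  rw [mapT, hnum, Set.mem_Icc, le_div_iff₀ (hK i), div_le_one (hK i), zero_mul]
  constructor
  · exact add_nonneg (add_nonneg h12 (mul_nonneg hc11 hs0)) (mul_nonneg hc22 hxs0)
  · linarith [mul_le_of_le_one_right hc11 hs1, mul_le_of_le_one_right hc22 hxs1]

theorem abs_sub_apply_le (hA0 : ∀ i j, 0 ≤ Atil i j) (hA1 : ∀ i, ∑ j, Atil i j = 1)
    (h11 : 0 ≤ δ11) (hord : δ11 ≤ δ22) (hα : ∀ i, 0 ≤ α i)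
    (hK : ∀ i, 0 < δ12 + δ21 + δ22 * α i) (hx : ∀ i, x i ∈ Icc (0 : ℝ) 1)
    (hy : ∀ i, y i ∈ Icc (0 : ℝ) 1) (i : Fin n) :
    |mapT δ11 δ12 δ21 δ22 α Atil x i - mapT δ11 δ12 δ21 δ22 α Atil y i| ≤
      (2 * δ22 - δ11) * α i / (δ12 + δ21 + δ22 * α i) * dist x y := by
  have hcoord : ∀ j, |x j - y j| ≤ dist x y := fun j => by
    simpa only [Real.dist_eq] using dist_le_pi_dist x y j
  have hsum := abs_sum_mul_sub_sum_mul_le_of_stochastic (hA0 i) (hA1 i) hcoord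
  have hsy := sum_mul_mem_Icc_of_stochastic (hA0 i) (hA1 i) hy
  have hprod : |x i * ∑ j, Atil i j * x j - y i * ∑ j, Atil i j * y j| ≤ 2 * dist x y :=
    (abs_mul_sub_mul_le (abs_le.2 ⟨by linarith [(hx i).1], (hx i).2⟩)
      (abs_le.2 ⟨by linarith [hsy.1], hsy.2⟩)).trans (by linarith [hcoord i])
  have hc11 : 0 ≤ δ11 * α i := mul_nonneg h11 (hα i)
  have hc22 : 0 ≤ (δ22 - δ11) * α i := mul_nonneg (sub_nonneg.2 hord) (hα i)
  rw [sub_apply, abs_div, abs_of_pos (hK i), div_mul_eq_mul_div,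
    div_le_div_iff_of_pos_right (hK i)]
  calc _ ≤ δ11 * α i * |∑ j, Atil i j * x j - ∑ j, Atil i j * y j|
        + (δ22 - δ11) * α i * |x i * ∑ j, Atil i j * x j - y i * ∑ j, Atil i j * y j| :=
        (abs_add_le _ _).trans_eq (by
          rw [abs_mul (δ11 * α i), abs_mul ((δ22 - δ11) * α i), abs_of_nonneg hc11,
            abs_of_nonneg hc22])
    _ ≤ δ11 * α i * dist x y + (δ22 - δ11) * α i * (2 * dist x y) := by gcongr
    _ = (2 * δ22 - δ11) * α i * dist x y := by ring

theorem dist_le (hA0 : ∀ i j, 0 ≤ Atil i j) (hA1 : ∀ i, ∑ j, Atil i j = 1)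
    (h11 : 0 ≤ δ11) (hord : δ11 ≤ δ22) (hα : ∀ i, 0 ≤ α i)
    (hK : ∀ i, 0 < δ12 + δ21 + δ22 * α i) (hx : ∀ i, x i ∈ Icc (0 : ℝ) 1)
    (hy : ∀ i, y i ∈ Icc (0 : ℝ) 1) :
    dist (mapT δ11 δ12 δ21 δ22 α Atil x) (mapT δ11 δ12 δ21 δ22 α Atil y) ≤
      (⨆ i, (2 * δ22 - δ11) * α i / (δ12 + δ21 + δ22 * α i)) * dist x y := by
  have hcoeff : ∀ i, 0 ≤ (2 * δ22 - δ11) * α i / (δ12 + δ21 + δ22 * α i) := fun i =>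
    div_nonneg (mul_nonneg (by linarith) (hα i)) (hK i).le
  refine (dist_pi_le_iff (mul_nonneg (Real.iSup_nonneg hcoeff) dist_nonneg)).2 fun i => ?_
  rw [Real.dist_eq]
  exact (abs_sub_apply_le hA0 hA1 h11 hord hα hK hx hy i).trans
    (mul_le_mul_of_nonneg_right (le_ciSup (Finite.bddAbove_range fun i =>
      (2 * δ22 - δ11) * α i / (δ12 + δ21 + δ22 * α i)) i) dist_nonneg)

end mapT

theorem stmt_10_general (n : ℕ) (δ11 δ12 δ21 δ22 : ℝ)
    (h11 : 0 < δ11 ∧ δ11 < 1) (h12 : 0 < δ12 ∧ δ12 < 1)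
    (h21 : 0 < δ21 ∧ δ21 < 1) (h22 : 0 < δ22 ∧ δ22 < 1)
    (hrow1 : δ11 + δ12 = 1) (hrow2 : δ21 + δ22 = 1) (hord : δ11 ≤ δ22)
    (α : Fin n → ℝ) (hα : ∀ i, 0 < α i ∧ α i < 1)
    (Atil : Matrix (Fin n) (Fin n) ℝ)
    (hA0 : ∀ i j, 0 ≤ Atil i j) (hA1 : ∀ i, ∑ j, Atil i j = 1) :
    (∀ x : Fin n → ℝ, (∀ i, 0 ≤ x i ∧ x i ≤ 1) →
      ∀ i, 0 ≤ mapT δ11 δ12 δ21 δ22 α Atil x i ∧ mapT δ11 δ12 δ21 δ22 α Atil x i ≤ 1) ∧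
    (∀ x y : Fin n → ℝ, (∀ i, 0 ≤ x i ∧ x i ≤ 1) → (∀ i, 0 ≤ y i ∧ y i ≤ 1) →
      (⨆ i, |mapT δ11 δ12 δ21 δ22 α Atil x i - mapT δ11 δ12 δ21 δ22 α Atil y i|) ≤
        (⨆ i, (2 * δ22 - δ11) * α i / (δ12 + δ21 + δ22 * α i)) * ⨆ i, |x i - y i|) ∧
    (⨆ i, (2 * δ22 - δ11) * α i / (δ12 + δ21 + δ22 * α i)) < 1 ∧
    (∃! p : Fin n → ℝ, (∀ i, 0 ≤ p i ∧ p i ≤ 1) ∧ mapT δ11 δ12 δ21 δ22 α Atil p = p) := by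
  have hα0 : ∀ i, 0 ≤ α i := fun i => (hα i).1.le
  have hK : ∀ i, 0 < δ12 + δ21 + δ22 * α i := fun i => by
    linarith [mul_pos h22.1 (hα i).1, h12.1, h21.1]
  have hcube : ∀ x : Fin n → ℝ, (∀ i, x i ∈ Icc (0 : ℝ) 1) →
      ∀ i, mapT δ11 δ12 δ21 δ22 α Atil x i ∈ Icc (0 : ℝ) 1 := fun x hx =>
    mapT.mem_Icc hA0 hA1 h11.1.le h12.1.le h21.1.le hord hα0 hK hx
  have hlip := fun x y (hx : ∀ i, x i ∈ Icc (0 : ℝ) 1) hy =>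
    mapT.dist_le (x := x) (y := y) hA0 hA1 h11.1.le hord hα0 hK hx hy
  have hcoeff : (⨆ i, (2 * δ22 - δ11) * α i / (δ12 + δ21 + δ22 * α i)) < 1 :=
    Real.iSup_lt_of_forall_lt one_pos fun i =>
      contraction_coeff_lt_one hrow1 hrow2 h22.2 hord (hα i).2.le (hK i)
  refine ⟨hcube, fun x y hx hy => ?_, hcoeff, ?_⟩
  · rw [iSup_abs_sub_eq_dist, iSup_abs_sub_eq_dist]
    exact hlip x y hx hy
  · have hfix := existsUnique_fixedPt_of_dist_le (s := univ.pi fun _ => Icc (0 : ℝ) 1)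
      (isClosed_set_pi fun _ _ => isClosed_Icc).isComplete
      ⟨0, mem_univ_pi.2 fun _ => ⟨le_rfl, zero_le_one⟩⟩
      (fun x hx => mem_univ_pi.2 (hcube x (mem_univ_pi.1 hx))) hcoeff
      (fun x hx y hy => hlip x y (mem_univ_pi.1 hx) (mem_univ_pi.1 hy))
    simpa only [mem_univ_pi, mem_Icc] using hfix

theorem stmt_10 (n : ℕ) (δ11 δ12 δ21 δ22 : ℝ)
    (h11 : 0 < δ11 ∧ δ11 < 1) (h12 : 0 < δ12 ∧ δ12 < 1)
    (h21 : 0 < δ21 ∧ δ21 < 1) (h22 : 0 < δ22 ∧ δ22 < 1)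
    (hrow1 : δ11 + δ12 = 1) (hrow2 : δ21 + δ22 = 1) (hord : δ11 ≤ δ22)
    (α : Fin n → ℝ) (hα : ∀ i, 0 < α i ∧ α i < 1)
    (Atil : Matrix (Fin n) (Fin n) ℝ)
    (hA0 : ∀ i j, 0 ≤ Atil i j) (hA1 : ∀ i, ∑ j, Atil i j = 1)
    (hAdiag : ∀ i, Atil i i = 0) :
    (∀ x : Fin n → ℝ, (∀ i, 0 ≤ x i ∧ x i ≤ 1) →
      ∀ i, 0 ≤ mapT δ11 δ12 δ21 δ22 α Atil x i ∧ mapT δ11 δ12 δ21 δ22 α Atil x i ≤ 1) ∧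
    (∀ x y : Fin n → ℝ, (∀ i, 0 ≤ x i ∧ x i ≤ 1) → (∀ i, 0 ≤ y i ∧ y i ≤ 1) →
      (⨆ i, |mapT δ11 δ12 δ21 δ22 α Atil x i - mapT δ11 δ12 δ21 δ22 α Atil y i|) ≤
        (⨆ i, (2 * δ22 - δ11) * α i / (δ12 + δ21 + δ22 * α i)) * ⨆ i, |x i - y i|) ∧
    (⨆ i, (2 * δ22 - δ11) * α i / (δ12 + δ21 + δ22 * α i)) < 1 ∧
    (∃! p : Fin n → ℝ, (∀ i, 0 ≤ p i ∧ p i ≤ 1) ∧ mapT δ11 δ12 δ21 δ22 α Atil p = p) :=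
  stmt_10_general n δ11 δ12 δ21 δ22 h11 h12 h21 h22 hrow1 hrow2 hord α hα Atil hA0 hA1
end

section
/- T is monotone on [0,1]^n: if 0 ⪯ x ⪯ y ⪯ 1_n then T(x) ⪯ T(y), where T(x) = δ₁₂ K^{-1} 1_n + δ₁₁ K^{-1} diag(α) Ã x + (δ₂₂-δ₁₁) K^{-1} diag(α) diag(x) Ã x with δ₂₂ ≥ δ₁₁ and all parameters in (0,1), K = (δ₁₂+δ₂₁)I + δ₂₂ diag(α), Ã row-stochastic. -/
theorem mapT_apply_mono {n : ℕ} {δ11 δ12 δ21 δ22 : ℝ} {α : Fin n → ℝ}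
    {Atil : Matrix (Fin n) (Fin n) ℝ} {x y : Fin n → ℝ} {i : Fin n}
    (hδ11 : 0 ≤ δ11) (hord : δ11 ≤ δ22) (hα : 0 ≤ α i)
    (hden : 0 ≤ δ12 + δ21 + δ22 * α i) (hA : 0 ≤ Atil i) (hx : 0 ≤ x) (hxy : x ≤ y) :
    mapT δ11 δ12 δ21 δ22 α Atil x i ≤ mapT δ11 δ12 δ21 δ22 α Atil y i := by
  have hs0 : 0 ≤ Atil i ⬝ᵥ x := dotProduct_nonneg_of_nonneg hA hx
  have hs : Atil i ⬝ᵥ x ≤ Atil i ⬝ᵥ y := dotProduct_le_dotProduct_of_nonneg_left hxy hA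
  -- `δ11 ≤ δ22` is what makes the quadratic term `x i * (Ã x) i` monotone.
  have hquad : 0 ≤ (δ22 - δ11) * α i := mul_nonneg (sub_nonneg.mpr hord) hα
  change (δ12 + δ11 * α i * (Atil i ⬝ᵥ x) + (δ22 - δ11) * α i * x i * (Atil i ⬝ᵥ x)) / _ ≤
    (δ12 + δ11 * α i * (Atil i ⬝ᵥ y) + (δ22 - δ11) * α i * y i * (Atil i ⬝ᵥ y)) / _
  gcongr
  · exact mul_nonneg hquad ((hx i).trans (hxy i))
  · exact hxy i

theorem stmt_11_general (n : ℕ) (δ11 δ12 δ21 δ22 : ℝ)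
    (h11 : 0 < δ11 ∧ δ11 < 1) (h12 : 0 < δ12 ∧ δ12 < 1)
    (h21 : 0 < δ21 ∧ δ21 < 1) (h22 : 0 < δ22 ∧ δ22 < 1)
    (hord : δ11 ≤ δ22)
    (α : Fin n → ℝ) (hα : ∀ i, 0 < α i ∧ α i < 1)
    (Atil : Matrix (Fin n) (Fin n) ℝ)
    (hA0 : ∀ i j, 0 ≤ Atil i j)
    (x y : Fin n → ℝ)
    (hx0 : ∀ i, 0 ≤ x i) (hxy : ∀ i, x i ≤ y i) :
    ∀ i, mapT δ11 δ12 δ21 δ22 α Atil x i ≤ mapT δ11 δ12 δ21 δ22 α Atil y i := fun i =>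
  mapT_apply_mono h11.1.le hord (hα i).1.le
    (add_nonneg (add_nonneg h12.1.le h21.1.le) (mul_nonneg h22.1.le (hα i).1.le))
    (hA0 i) hx0 hxy

theorem stmt_11 (n : ℕ) (δ11 δ12 δ21 δ22 : ℝ)
    (h11 : 0 < δ11 ∧ δ11 < 1) (h12 : 0 < δ12 ∧ δ12 < 1)
    (h21 : 0 < δ21 ∧ δ21 < 1) (h22 : 0 < δ22 ∧ δ22 < 1)
    (hrow1 : δ11 + δ12 = 1) (hrow2 : δ21 + δ22 = 1) (hord : δ11 ≤ δ22)
    (α : Fin n → ℝ) (hα : ∀ i, 0 < α i ∧ α i < 1)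
    (Atil : Matrix (Fin n) (Fin n) ℝ)
    (hA0 : ∀ i j, 0 ≤ Atil i j) (hA1 : ∀ i, ∑ j, Atil i j = 1)
    (x y : Fin n → ℝ)
    (hx0 : ∀ i, 0 ≤ x i) (hxy : ∀ i, x i ≤ y i) (hy1 : ∀ i, y i ≤ 1) :
    ∀ i, mapT δ11 δ12 δ21 δ22 α Atil x i ≤ mapT δ11 δ12 δ21 δ22 α Atil y i :=
  stmt_11_general n δ11 δ12 δ21 δ22 h11 h12 h21 h22 hord α hα Atil hA0 x y hx0 hxy
end

section
/- Let M ∈ ℝ^{n×n} be row-stochastic such that the graph G(M) is aperiodic and has a globally reachable node. Let Q be the n×n matrix with rows (Q_{i,i}, Q_{i,i+1}) = (-1, 1) for i = 1,…,n-1 and last row (1/n,…,1/n). Then Q is invertible and Q M Q^{-1} has block lower-triangular form [[M_red, 0],[cᵀ, 1]] for some M_red ∈ ℝ^{(n-1)×(n-1)} with spectral radius strictly less than 1. -/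
/-
Since `M` fixes the all-ones vector and `Q` maps it to the last basis vector, the last column of
`Q M Q⁻¹` is that basis vector, which is the block form. An eigenvalue `μ` of `M_red` is an
eigenvalue of its transpose; padding a left eigenvector of `M_red` with a zero and multiplying by
`Q` gives a left eigenvector `x` of `M` with `∑ x = 0`. If column `j` of `P = M ^ k` has all
entries `≥ δ > 0`, then `∑ x = 0` means `x P = x (P - δ 1 e_jᵀ)`, and the latter matrix is
nonnegative with row sums `1 - δ`, so `‖x P‖₁ ≤ (1 - δ) ‖x‖₁`. Hence `|μ| ^ k ≤ 1 - δ < 1`.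
-/

/-- The pairwise-difference transform matrix `Q`: rows `i < n-1` are `e_{i+1} - e_i`,
and the last row is `(1/n, …, 1/n)`. -/
noncomputable def pairDiffQ (m : ℕ) : Matrix (Fin (m + 1)) (Fin (m + 1)) ℝ :=
  Matrix.of fun i j =>
    if (i : ℕ) = m then ((m : ℝ) + 1)⁻¹
    else if j = i then -1
    else if (j : ℕ) = (i : ℕ) + 1 then 1
    else 0

open Matrix

section PairDiff

variable {m : ℕ}

lemma pairDiffQ_castSucc (i : Fin m) :
    pairDiffQ m i.castSucc = Pi.single i.succ 1 - Pi.single i.castSucc 1 := by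
  ext j
  simp only [pairDiffQ, of_apply, Pi.sub_apply, Pi.single_apply, Fin.ext_iff, Fin.val_castSucc,
    Fin.val_succ]
  split_ifs <;> first | omega | norm_num

lemma pairDiffQ_last : pairDiffQ m (Fin.last m) = fun _ => ((m : ℝ) + 1)⁻¹ := by
  ext j
  simp [pairDiffQ]

lemma pairDiffQ_mulVec_castSucc (u : Fin (m + 1) → ℝ) (i : Fin m) :
    (pairDiffQ m *ᵥ u) i.castSucc = u i.succ - u i.castSucc := by
  rw [mulVec, pairDiffQ_castSucc, sub_dotProduct, single_one_dotProduct, single_one_dotProduct]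

lemma pairDiffQ_mulVec_last (u : Fin (m + 1) → ℝ) :
    (pairDiffQ m *ᵥ u) (Fin.last m) = ((m : ℝ) + 1)⁻¹ * ∑ j, u j := by
  simp [mulVec, pairDiffQ_last, dotProduct, Finset.mul_sum]

lemma pairDiffQ_mulVec_one : pairDiffQ m *ᵥ 1 = Pi.single (Fin.last m) 1 := by
  ext i
  induction i using Fin.lastCases with
  | last => simp [pairDiffQ_mulVec_last]; field_simp
  | cast i => simp [pairDiffQ_mulVec_castSucc, Fin.castSucc_ne_last]

variable (m) in
lemma isUnit_pairDiffQ : IsUnit (pairDiffQ m) := by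
  rw [isUnit_iff_isUnit_det, isUnit_iff_ne_zero, Ne, ← exists_mulVec_eq_zero_iff]
  rintro ⟨u, hu, hQu⟩
  have hconst : ∀ i, u i = u 0 := by
    intro i
    induction i using Fin.induction with
    | zero => rfl
    | succ i ih =>
      have hdiff := congrFun hQu i.castSucc
      rw [pairDiffQ_mulVec_castSucc] at hdiff
      rw [← ih]
      simpa [sub_eq_zero] using hdiff
  have hmean := congrFun hQu (Fin.last m)
  simp only [pairDiffQ_mulVec_last, hconst, Finset.sum_const, Finset.card_univ, Fintype.card_fin,
    nsmul_eq_mul, Pi.zero_apply] at hmean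
  have hu0 : u 0 = 0 := by
    simpa [(by positivity : (m : ℝ) + 1 ≠ 0)] using hmean
  exact hu (funext fun i => (hconst i).trans hu0)

variable (m) in
lemma pairDiffQ_map_ofReal_mulVec_one :
    (pairDiffQ m).map Complex.ofReal *ᵥ 1 = Pi.single (Fin.last m) 1 := by
  ext i
  change ((pairDiffQ m).map Complex.ofRealHom *ᵥ (Complex.ofRealHom ∘ 1)) i = _
  rw [← RingHom.map_mulVec, pairDiffQ_mulVec_one]
  by_cases hi : i = Fin.last m <;> simp [hi]

end PairDiff

lemma eq_reindex_fromBlocks_of_mulVec_single_last {α : Type*} [Semiring α] {m : ℕ}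
    (T : Matrix (Fin (m + 1)) (Fin (m + 1)) α)
    (hT : T *ᵥ Pi.single (Fin.last m) 1 = Pi.single (Fin.last m) 1) :
    T = reindex finSumFinEquiv finSumFinEquiv
      (fromBlocks (T.submatrix Fin.castSucc Fin.castSucc) 0
        (of fun _ j => T (Fin.last m) j.castSucc) 1) := by
  rw [mulVec_single_one] at hT
  ext i j
  have hcol := congrFun hT i
  simp only [col_apply] at hcol
  induction i using Fin.lastCases <;> induction j using Fin.lastCases <;>
    simp_all [finSumFinEquiv_symm_last, finSumFinEquiv_symm_apply_castSucc, Fin.castSucc_ne_last]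

lemma map_reindex_fromBlocks_zero_one {α β : Type*} [Zero α] [One α] [Zero β] [One β]
    {l m n : Type*} [DecidableEq l] [DecidableEq m] [DecidableEq n] (e : l ⊕ m ≃ n)
    (R : Matrix l l α) (c : Matrix m l α) {f : α → β} (hf₀ : f 0 = 0) (hf₁ : f 1 = 1) :
    (reindex e e (fromBlocks R 0 c 1)).map f =
      reindex e e (fromBlocks (R.map f) 0 (c.map f) 1) := by
  rw [reindex_apply, reindex_apply, ← submatrix_map, fromBlocks_map, Matrix.map_zero _ hf₀,
    Matrix.map_one _ hf₀ hf₁]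

lemma conj_mulVec_single_last {K : Type*} [Field K] {m : ℕ}
    {Q A : Matrix (Fin (m + 1)) (Fin (m + 1)) K} (hQ : IsUnit Q)
    (hQ1 : Q *ᵥ 1 = Pi.single (Fin.last m) 1) (hA : A *ᵥ 1 = 1) :
    (Q * A * Q⁻¹) *ᵥ Pi.single (Fin.last m) 1 = Pi.single (Fin.last m) 1 := by
  have hQinv : Q⁻¹ *ᵥ Pi.single (Fin.last m) 1 = 1 := by
    rw [← hQ1, mulVec_mulVec, nonsing_inv_mul _ ((isUnit_iff_isUnit_det Q).1 hQ), one_mulVec]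
  rw [← mulVec_mulVec, hQinv, ← mulVec_mulVec, hA, hQ1]

lemma exists_vecMul_eq_smul_of_mulVec_eq_smul {K n : Type*} [Field K] [Fintype n] [DecidableEq n]
    (A : Matrix n n K) {μ : K} {v : n → K} (hv : v ≠ 0) (h : A *ᵥ v = μ • v) :
    ∃ y ≠ 0, y ᵥ* A = μ • y := by
  have hdet : (μ • (1 : Matrix n n K) - A).det = 0 :=
    exists_mulVec_eq_zero_iff.1 ⟨v, hv, by rw [sub_mulVec, smul_mulVec, one_mulVec, h, sub_self]⟩
  obtain ⟨y, hy, hy0⟩ := exists_vecMul_eq_zero_iff.2 hdet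
  refine ⟨y, hy, ?_⟩
  rw [vecMul_sub, vecMul_smul, vecMul_one, sub_eq_zero] at hy0
  exact hy0.symm

lemma exists_vecMul_eq_smul_sum_eq_zero_of_mul_eq_fromBlocks_mul {K : Type*} [Field K] {m : ℕ}
    {Q A : Matrix (Fin (m + 1)) (Fin (m + 1)) K} {R : Matrix (Fin m) (Fin m) K}
    {c : Matrix (Fin 1) (Fin m) K} (hQ : IsUnit Q) (hQ1 : Q *ᵥ 1 = Pi.single (Fin.last m) 1)
    (hA : Q * A = reindex finSumFinEquiv finSumFinEquiv (fromBlocks R 0 c 1) * Q)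
    {μ : K} {y : Fin m → K} (hy : y ≠ 0) (hyR : y ᵥ* R = μ • y) :
    ∃ x ≠ 0, x ᵥ* A = μ • x ∧ ∑ i, x i = 0 := by
  set z : Fin (m + 1) → K := Sum.elim y 0 ∘ finSumFinEquiv.symm
  have hz : z ≠ 0 := by
    contrapose! hy
    ext i
    simpa [z] using congrFun hy (finSumFinEquiv (Sum.inl i))
  have hzT : z ᵥ* reindex finSumFinEquiv finSumFinEquiv (fromBlocks R 0 c 1) = μ • z := by
    have hzz : z ∘ finSumFinEquiv.symm.symm = Sum.elim y 0 := by ext; simp [z]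
    rw [reindex_apply, submatrix_vecMul_equiv, hzz, vecMul_fromBlocks]
    ext i
    rcases h : finSumFinEquiv.symm i <;> simp [hyR, z, h]
  refine ⟨z ᵥ* Q, ?_, ?_, ?_⟩
  · exact fun h => hz ((vecMul_injective_iff_isUnit.2 hQ) (h.trans (zero_vecMul Q).symm))
  · rw [vecMul_vecMul, hA, ← vecMul_vecMul, hzT, smul_vecMul]
  · rw [← dotProduct_one, ← dotProduct_mulVec, hQ1, dotProduct_single_one]
    simp [z, finSumFinEquiv_symm_last]

section Stochastic

variable {n : Type*} [Fintype n] [DecidableEq n] {P : Matrix n n ℝ}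

lemma sum_norm_vecMul_le_of_sum_eq_zero (hP : P ∈ rowStochastic ℝ n) {j : n} {δ : ℝ}
    (hδ : ∀ i, δ ≤ P i j) {x : n → ℂ} (hx : ∑ i, x i = 0) :
    ∑ k, ‖(x ᵥ* P.map Complex.ofReal) k‖ ≤ (1 - δ) * ∑ i, ‖x i‖ := by
  set d : n → ℝ := Pi.single j δ
  have hd : ∀ i k, 0 ≤ P i k - d k := fun i k => by
    by_cases hk : k = j
    · simpa [d, hk] using hδ i
    · simpa [d, hk] using nonneg_of_mem_rowStochastic hP
  calc ∑ k, ‖(x ᵥ* P.map Complex.ofReal) k‖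
      = ∑ k, ‖∑ i, x i * ((P i k - d k : ℝ) : ℂ)‖ := by
        refine Finset.sum_congr rfl fun k _ => congrArg _ ?_
        simp only [vecMul, dotProduct, map_apply, Complex.ofReal_sub, mul_sub,
          Finset.sum_sub_distrib, ← Finset.sum_mul, hx, zero_mul, sub_zero]
    _ ≤ ∑ k, ∑ i, ‖x i‖ * (P i k - d k) := by
        refine Finset.sum_le_sum fun k _ => (norm_sum_le _ _).trans_eq ?_
        refine Finset.sum_congr rfl fun i _ => ?_
        rw [norm_mul, Complex.norm_real, Real.norm_of_nonneg (hd i k)]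
    _ = (1 - δ) * ∑ i, ‖x i‖ := by
        rw [Finset.sum_comm, Finset.mul_sum]
        refine Finset.sum_congr rfl fun i _ => ?_
        rw [← Finset.mul_sum, Finset.sum_sub_distrib, sum_row_of_mem_rowStochastic hP,
          Finset.sum_pi_single', if_pos (Finset.mem_univ j), mul_comm]

lemma norm_lt_one_of_vecMul_eq_smul_of_sum_eq_zero (hP : P ∈ rowStochastic ℝ n) {j : n}
    (hj : ∀ i, 0 < P i j) {x : n → ℂ} (hx : x ≠ 0) (hsum : ∑ i, x i = 0) {μ : ℂ}
    (hμ : x ᵥ* P.map Complex.ofReal = μ • x) : ‖μ‖ < 1 := by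
  obtain ⟨i₀, hi₀⟩ := Function.ne_iff.1 hx
  obtain ⟨i₁, -, hmin⟩ := Finset.exists_min_image Finset.univ (fun i => P i j) ⟨i₀, by simp⟩
  have hnorm : 0 < ∑ i, ‖x i‖ :=
    Finset.sum_pos' (fun i _ => norm_nonneg _) ⟨i₀, Finset.mem_univ _, norm_pos_iff.2 hi₀⟩
  have h := sum_norm_vecMul_le_of_sum_eq_zero hP (fun i => hmin i (Finset.mem_univ i)) hsum
  simp only [hμ, Pi.smul_apply, smul_eq_mul, norm_mul, ← Finset.mul_sum] at h
  nlinarith [hj i₁]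

lemma vecMul_pow_eq_pow_smul {R : Type*} [CommSemiring R] (A : Matrix n n R) {μ : R}
    {x : n → R} (h : x ᵥ* A = μ • x) (k : ℕ) : x ᵥ* A ^ k = μ ^ k • x := by
  induction k with
  | zero => simp
  | succ k ih => rw [pow_succ, ← vecMul_vecMul, ih, smul_vecMul, h, smul_smul, pow_succ]

lemma norm_lt_one_of_vecMul_eq_smul_of_pow_pos {M : Matrix n n ℝ} (hM : M ∈ rowStochastic ℝ n)
    {j : n} {k : ℕ} (hk : k ≠ 0) (hj : ∀ i, 0 < (M ^ k) i j) {x : n → ℂ} (hx : x ≠ 0)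
    (hsum : ∑ i, x i = 0) {μ : ℂ} (hμ : x ᵥ* M.map Complex.ofReal = μ • x) : ‖μ‖ < 1 := by
  have hμk : x ᵥ* (M ^ k).map Complex.ofReal = μ ^ k • x := by
    change x ᵥ* Complex.ofRealHom.mapMatrix (M ^ k) = _
    rw [map_pow]
    exact vecMul_pow_eq_pow_smul _ hμ k
  have := norm_lt_one_of_vecMul_eq_smul_of_sum_eq_zero (pow_mem hM k) hj hx hsum hμk
  rwa [norm_pow, pow_lt_one_iff_of_nonneg (norm_nonneg μ) hk] at this

end Stochastic

theorem stmt_16 (m : ℕ) (M : Matrix (Fin (m + 1)) (Fin (m + 1)) ℝ)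
    (hM0 : ∀ i j, 0 ≤ M i j) (hM1 : ∀ i, ∑ j, M i j = 1)
    (haper : ∃ j, ∃ k₀, ∀ k ≥ k₀, ∀ i, 0 < (M ^ k) i j) :
    IsUnit (pairDiffQ m) ∧
    ∃ (Mred : Matrix (Fin m) (Fin m) ℝ) (c : Matrix (Fin 1) (Fin m) ℝ),
      pairDiffQ m * M * (pairDiffQ m)⁻¹ =
        Matrix.reindex finSumFinEquiv finSumFinEquiv (Matrix.fromBlocks Mred 0 c 1) ∧
      ∀ (μ : ℂ) (v : Fin m → ℂ), v ≠ 0 →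
        (Mred.map Complex.ofReal).mulVec v = μ • v → ‖μ‖ < 1 := by
  have hM : M ∈ rowStochastic ℝ _ := mem_rowStochastic_iff_sum.2 ⟨hM0, hM1⟩
  have hQ := isUnit_pairDiffQ m
  have hblock := eq_reindex_fromBlocks_of_mulVec_single_last _
    (conj_mulVec_single_last hQ pairDiffQ_mulVec_one (one_vecMul_of_mem_rowStochastic hM))
  refine ⟨hQ, _, _, hblock, fun μ v hv hvR => ?_⟩
  have hQM : pairDiffQ m * M = pairDiffQ m * M * (pairDiffQ m)⁻¹ * pairDiffQ m :=
    (nonsing_inv_mul_cancel_right _ _ ((isUnit_iff_isUnit_det _).1 hQ)).symm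
  rw [hblock] at hQM
  have hQMC := congrArg (Matrix.map · Complex.ofRealHom) hQM
  simp only [Matrix.map_mul, map_reindex_fromBlocks_zero_one _ _ _ (map_zero Complex.ofRealHom)
    (map_one Complex.ofRealHom)] at hQMC
  obtain ⟨y, hy, hyR⟩ := exists_vecMul_eq_smul_of_mulVec_eq_smul _ hv hvR
  obtain ⟨x, hx, hxM, hxsum⟩ := exists_vecMul_eq_smul_sum_eq_zero_of_mul_eq_fromBlocks_mul
    (hQ.map Complex.ofRealHom.mapMatrix) (pairDiffQ_map_ofReal_mulVec_one m) hQMC hy hyR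
  obtain ⟨j, k₀, hpos⟩ := haper
  exact norm_lt_one_of_vecMul_eq_smul_of_pow_pos hM k₀.succ_ne_zero (hpos _ k₀.le_succ) hx
    hxsum hxM
end
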